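/- Let A ∈ ℝ^{m×n}, let k ≥ 1, and let 𝒜 ∈ ℝ^{(k+1)m×(kn+m)} be the k-commodity constraint matrix built from A. Let d₁,…,d_{k+1} ∈ ℝ^m be vectors, D_i = diag(d_i), D_Σ = Σ_{i=1}^{k+1} D_i, and let D ∈ ℝ^{(k+1)m×(k+1)m} be the block-diagonal matrix with diagonal blocks D₁,…,D_{k+1}. Then 𝒜ᵀ D 𝒜 equals the block matrix whose (i,j) block for 1 ≤ i,j ≤ k is Aᵀ D_i A if i = j and 0 otherwise, whose (i, k+1) block for 1 ≤ i ≤ k is Aᵀ D_i, whose (k+1, j) block for 1 ≤ j ≤ k is D_j A, and whose (k+1, k+1) block is D_Σ. -/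

import Mathlib

open Matrix

/-- The `k`-commodity constraint matrix built from `A ∈ ℝ^{m×n}`.
Rows are indexed by pairs `(i, e)` with `i ∈ Fin (k+1)`, `e ∈ Fin m`; columns are indexed
by pairs `(j, v)` with `j ∈ Fin k`, `v ∈ Fin n`, together with indices `e' ∈ Fin m`.
The entry at `((i,e),(j,v))` is `A e v` if `i = j` (as naturals) and `0` otherwise, and the
entry at `((i,e), e')` is `1` if `e = e'` and `0` otherwise. -/
def commodityMatrix {m n : ℕ} (k : ℕ) (A : Matrix (Fin m) (Fin n) ℝ) :
    Matrix (Fin (k + 1) × Fin m) ((Fin k × Fin n) ⊕ Fin m) ℝ :=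
  Matrix.of fun p q =>
    match q with
    | Sum.inl (j, v) => if (p.1 : ℕ) = (j : ℕ) then A p.2 v else 0
    | Sum.inr e' => if p.2 = e' then 1 else 0

theorem Matrix.transpose_mul_diagonal_mul_apply {ι α β R : Type*} [Fintype ι] [DecidableEq ι]
    [CommSemiring R] (B : Matrix ι α R) (w : ι → R) (C : Matrix ι β R) (a : α) (b : β) :
    (Bᵀ * diagonal w * C) a b = ∑ i, B i a * w i * C i b := by
  rw [mul_apply]
  simp only [mul_diagonal, transpose_apply]

section CommodityMatrix

variable {m n k : ℕ} (A : Matrix (Fin m) (Fin n) ℝ)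

theorem commodityMatrix_apply_inl (i : Fin (k + 1)) (e : Fin m) (j : Fin k) (v : Fin n) :
    commodityMatrix k A (i, e) (Sum.inl (j, v)) = if i = j.castSucc then A e v else 0 := by
  simp [commodityMatrix, Fin.ext_iff]

theorem commodityMatrix_apply_inr (i : Fin (k + 1)) (e e' : Fin m) :
    commodityMatrix k A (i, e) (Sum.inr e') = if e = e' then 1 else 0 :=
  rfl

variable (d : Fin (k + 1) → Fin m → ℝ)

local notation "𝒢" =>
  (commodityMatrix k A)ᵀ * diagonal (Function.uncurry d) * commodityMatrix k A

theorem commodityGram_inl_inl (i j : Fin k) (v v' : Fin n) :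
    𝒢 (Sum.inl (i, v)) (Sum.inl (j, v')) =
      if i = j then (Aᵀ * diagonal (d i.castSucc) * A) v v' else 0 := by
  rw [transpose_mul_diagonal_mul_apply, transpose_mul_diagonal_mul_apply, Fintype.sum_prod_type]
  split_ifs with hij
  · subst hij
    simp [commodityMatrix_apply_inl, ite_mul, mul_ite]
  · simp [commodityMatrix_apply_inl, ite_mul, mul_ite, Fin.castSucc_inj, Ne.symm hij]

theorem commodityGram_inl_inr (i : Fin k) (v : Fin n) (e : Fin m) :
    𝒢 (Sum.inl (i, v)) (Sum.inr e) = (Aᵀ * diagonal (d i.castSucc)) v e := by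
  rw [transpose_mul_diagonal_mul_apply, mul_diagonal, Fintype.sum_prod_type]
  simp [commodityMatrix_apply_inl, commodityMatrix_apply_inr, ite_mul]

theorem commodityGram_inr_inl (e : Fin m) (j : Fin k) (v : Fin n) :
    𝒢 (Sum.inr e) (Sum.inl (j, v)) = (diagonal (d j.castSucc) * A) e v := by
  rw [transpose_mul_diagonal_mul_apply, diagonal_mul, Fintype.sum_prod_type]
  simp [commodityMatrix_apply_inl, commodityMatrix_apply_inr, mul_ite]

theorem commodityGram_inr_inr (e e' : Fin m) :
    𝒢 (Sum.inr e) (Sum.inr e') = diagonal (fun e'' : Fin m => ∑ i, d i e'') e e' := by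
  rw [transpose_mul_diagonal_mul_apply, diagonal_apply, Fintype.sum_prod_type]
  obtain rfl | h := eq_or_ne e e'
  · simp [commodityMatrix_apply_inr]
  · simp [commodityMatrix_apply_inr, h, h.symm]

end CommodityMatrix

theorem commodity_gram_blocks {m n k : ℕ}
    (A : Matrix (Fin m) (Fin n) ℝ) (d : Fin (k + 1) → Fin m → ℝ) :
    (commodityMatrix k A)ᵀ *
        Matrix.diagonal (fun p : Fin (k + 1) × Fin m => d p.1 p.2) *
        commodityMatrix k A =
      Matrix.of fun p q =>
        match p, q with
        | Sum.inl (i, v), Sum.inl (j, v') =>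
            if i = j then (Aᵀ * Matrix.diagonal (d i.castSucc) * A) v v' else 0
        | Sum.inl (i, v), Sum.inr e =>
            (Aᵀ * Matrix.diagonal (d i.castSucc)) v e
        | Sum.inr e, Sum.inl (j, v) =>
            (Matrix.diagonal (d j.castSucc) * A) e v
        | Sum.inr e, Sum.inr e' =>
            Matrix.diagonal (fun e'' : Fin m => ∑ i, d i e'') e e' := by
  ext (⟨i, v⟩ | e) (⟨j, v'⟩ | e')
  · exact commodityGram_inl_inl A d i j v v'
  · exact commodityGram_inl_inr A d i v e'
  · exact commodityGram_inr_inl A d e j v'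
  · exact commodityGram_inr_inr A d e e'
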